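/- arXiv:1711.08779 — 2 statements merged into one kernel-verified Lean document; each statement's English description precedes it below -/
import Mathlib

section
/- For any small category C, the edgewise subdivision of the nerve of C is naturally isomorphic to the nerve of the twisted arrow category of C: Sd(N(C)) ≅ N(tw C). -/
open CategoryTheory Simplicial

def sdMap {m n : ℕ} (α : Fin (m + 1) →o Fin (n + 1)) :
    Fin (2 * m + 1 + 1) →o Fin (2 * n + 1 + 1) where
  toFun k :=
    if h : (k : ℕ) ≤ m then
      ⟨n - (α ⟨m - (k : ℕ), by omega⟩ : ℕ), by omega⟩
    else
      ⟨n + 1 + (α ⟨(k : ℕ) - m - 1, by have := k.isLt; omega⟩ : ℕ), by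
        have := (α ⟨(k : ℕ) - m - 1, by have := k.isLt; omega⟩).isLt; omega⟩
  monotone' := by
    intro a b hab
    have hab' : (a : ℕ) ≤ b := hab
    dsimp only
    split_ifs with ha hb hb
    · have h1 : (⟨m - (b : ℕ), by omega⟩ : Fin (m + 1)) ≤ ⟨m - (a : ℕ), by omega⟩ := by
        simp only [Fin.mk_le_mk]; omega
      have := α.monotone h1
      simp only [Fin.le_def] at this ⊢
      omega
    · have h1 := (α ⟨m - (a : ℕ), by omega⟩).isLt
      simp only [Fin.mk_le_mk]
      omega
    · omega
    · have h1 : (⟨(a : ℕ) - m - 1, by have := a.isLt; omega⟩ : Fin (m + 1)) ≤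
          ⟨(b : ℕ) - m - 1, by have := b.isLt; omega⟩ := by
        simp only [Fin.mk_le_mk]; omega
      have := α.monotone h1
      simp only [Fin.le_def] at this ⊢
      omega

lemma sdMap_of_le {m n : ℕ} (α : Fin (m + 1) →o Fin (n + 1)) (k : Fin (2 * m + 1 + 1))
    (h : (k : ℕ) ≤ m) :
    (sdMap α k : ℕ) = n - (α ⟨m - (k : ℕ), by omega⟩ : ℕ) := by
  exact congrArg Fin.val (dif_pos h)

lemma sdMap_of_gt {m n : ℕ} (α : Fin (m + 1) →o Fin (n + 1)) (k : Fin (2 * m + 1 + 1))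
    (h : ¬ (k : ℕ) ≤ m) :
    (sdMap α k : ℕ) = n + 1 + (α ⟨(k : ℕ) - m - 1, by have := k.isLt; omega⟩ : ℕ) := by
  exact congrArg Fin.val (dif_neg h)

lemma sdMap_id {m : ℕ} : sdMap (OrderHom.id : Fin (m+1) →o Fin (m+1)) = OrderHom.id := by
  ext k
  have hk := k.isLt
  by_cases h : (k : ℕ) ≤ m
  · rw [sdMap_of_le _ k h]; simp; omega
  · rw [sdMap_of_gt _ k h]; simp; omega

lemma sdMap_comp {m n p : ℕ} (f : Fin (m+1) →o Fin (n+1)) (g : Fin (n+1) →o Fin (p+1)) :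
    sdMap (g.comp f) = (sdMap g).comp (sdMap f) := by
  ext k
  have hk := k.isLt
  simp only [OrderHom.comp_coe, Function.comp_apply]
  by_cases h : (k : ℕ) ≤ m
  · rw [sdMap_of_le _ k h]
    have h2 : ((sdMap f k : Fin (2 * n + 1 + 1)) : ℕ) ≤ n := by
      rw [sdMap_of_le _ k h]; omega
    rw [sdMap_of_le _ _ h2]
    have h3 := (f ⟨m - (k : ℕ), by omega⟩).isLt
    simp only [OrderHom.comp_coe, Function.comp_apply]
    have harg : f ⟨m - (k : ℕ), by omega⟩ =
        ⟨n - ((sdMap f k : Fin (2 * n + 1 + 1)) : ℕ), by omega⟩ := by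
      apply Fin.ext
      simp only [Fin.val_mk]
      rw [sdMap_of_le _ k h]
      omega
    rw [harg]
  · rw [sdMap_of_gt _ k h]
    have h2 : ¬ ((sdMap f k : Fin (2 * n + 1 + 1)) : ℕ) ≤ n := by
      rw [sdMap_of_gt _ k h]; omega
    rw [sdMap_of_gt _ _ h2]
    simp only [OrderHom.comp_coe, Function.comp_apply]
    have h3 := k.isLt
    have harg : f ⟨(k : ℕ) - m - 1, by omega⟩ =
        ⟨((sdMap f k : Fin (2 * n + 1 + 1)) : ℕ) - n - 1, by omega⟩ := by
      apply Fin.ext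
      simp only [Fin.val_mk]
      rw [sdMap_of_gt _ k h]
      omega
    rw [harg]

/-- The edgewise subdivision functor `μ : Δ → Δ`, `[n] ↦ [n]ᵒᵖ ∗ [n] = [2n+1]`. -/
def sdFunctor : SimplexCategory ⥤ SimplexCategory where
  obj x := SimplexCategory.mk (2 * x.len + 1)
  map {x y} α := SimplexCategory.Hom.mk (sdMap α.toOrderHom)
  map_id := by
    intro x
    apply SimplexCategory.Hom.ext'
    simp only [SimplexCategory.Hom.toOrderHom_mk, SimplexCategory.id_toOrderHom, sdMap_id]
  map_comp := by
    intro x y z f g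
    apply SimplexCategory.Hom.ext'
    simp only [SimplexCategory.Hom.toOrderHom_mk, SimplexCategory.comp_toOrderHom, sdMap_comp]

open CategoryTheory

/-- Edgewise subdivision as an endofunctor of simplicial sets. -/
def Sd : SSet.{u} ⥤ SSet.{u} :=
  (Functor.whiskeringLeft _ _ _).obj sdFunctor.op

/-- The twisted arrow category of a category `C`: objects are morphisms of `C`. -/
structure Tw (C : Type u) [Category.{v} C] where
  {left : C}
  {right : C}
  hom : left ⟶ right

namespace Tw

variable {C : Type u} [Category.{v} C]

/-- A morphism `(c → d) ⟶ (c' → d')` in the twisted arrow category is a pair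
`c' → c`, `d → d'` making the evident square commute. -/
@[ext]
structure Hom (f g : Tw C) where
  mleft : g.left ⟶ f.left
  mright : f.right ⟶ g.right
  w : mleft ≫ f.hom ≫ mright = g.hom := by aesop_cat

attribute [simp] Hom.w

instance : Category.{v} (Tw C) where
  Hom := Tw.Hom
  id f := { mleft := 𝟙 _, mright := 𝟙 _ }
  comp {f g h} u v :=
    { mleft := v.mleft ≫ u.mleft
      mright := u.mright ≫ v.mright
      w := by
        rw [← v.w, ← u.w]
        simp only [Category.assoc] }
  id_comp := by intro f g u; apply Hom.ext <;> simp
  comp_id := by intro f g u; apply Hom.ext <;> simp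
  assoc := by intro f g h i u v w; apply Hom.ext <;> simp

end Tw

/-!
Under the identification `[2n+1] = [n]ᵒᵖ ⋆ [n]` (the join, with `a ↦ n - a` on the left and
`b ↦ n + 1 + b` on the right), `Sd` precomposes with `αᵒᵖ ⋆ α`. A functor `H : Aᵒᵖ ⋆ A ⥤ C`
restricts to `A ⥤ Tw C`, `a ↦ H (op a ⟶ a)`, naturally in `A`. When `A` is linearly ordered
this restriction is bijective: `H (op a ⟶ b)` is recovered as the zigzag
`H (op a) → H (op c) → H c → H b` through `c = min a b`, and this zigzag does not depend on the
lower bound `c` of `a` and `b`, by the commuting squares of `Tw C`.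
-/

open Opposite
open scoped Join

namespace CategoryTheory

lemma Join.mkFunctor_whiskerRight_edgeTransform {A B D : Type*} [Category A] [Category B]
    [Category D] (H : A ⋆ B ⥤ D) :
    mkFunctor (inclLeft A B ⋙ H) (inclRight A B ⋙ H)
      (Functor.whiskerRight (edgeTransform A B) H) = H :=
  (Functor.ext_of_iso (isoMkFunctor H) (by rintro (_ | _) <;> rfl)
    (by rintro (_ | _) <;> rfl)).symm

instance Join.isThin {A B : Type*} [Category A] [Category B] [Quiver.IsThin A]
    [Quiver.IsThin B] : Quiver.IsThin (A ⋆ B) := fun X Y =>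
  match X, Y with
  | .left _, .left _ => inferInstanceAs (Subsingleton (ULift _))
  | .right _, .right _ => inferInstanceAs (Subsingleton (ULift _))
  | .left _, .right _ => inferInstance
  | .right _, .left _ => ⟨fun f => (Join.false_of_right_to_left f).elim⟩

namespace Functor

variable {X D : Type*} [Category X] [Category D] [Quiver.IsThin D]

noncomputable def ofNonemptyHom (obj : X → D)
    (map : ∀ {x y : X}, (x ⟶ y) → Nonempty (obj x ⟶ obj y)) : X ⥤ D where
  obj := obj
  map f := (map f).some
  map_id _ := Subsingleton.elim _ _
  map_comp _ _ := Subsingleton.elim _ _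

lemma ext_of_isThin {F G : X ⥤ D} (h : ∀ x, F.obj x = G.obj x) : F = G :=
  Functor.ext h fun _ _ _ => Subsingleton.elim _ _

end Functor

end CategoryTheory

namespace Tw

variable {C : Type u} [Category.{v} C]

@[simp]
lemma comp_mleft {x y z : Tw C} (u : x ⟶ y) (v : y ⟶ z) : (u ≫ v).mleft = v.mleft ≫ u.mleft :=
  rfl

@[simp]
lemma comp_mright {x y z : Tw C} (u : x ⟶ y) (v : y ⟶ z) :
    (u ≫ v).mright = u.mright ≫ v.mright :=
  rfl

@[ext]
lemma hom_ext {x y : Tw C} {u v : x ⟶ y} (hl : u.mleft = v.mleft) (hr : u.mright = v.mright) :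
    u = v :=
  Hom.ext hl hr

@[simp]
lemma eqToHom_mleft {x y : Tw C} (h : x = y) :
    (eqToHom h).mleft = eqToHom (congrArg Tw.left h).symm := by
  subst h; rfl

@[simp]
lemma eqToHom_mright {x y : Tw C} (h : x = y) :
    (eqToHom h).mright = eqToHom (congrArg Tw.right h) := by
  subst h; rfl

def leftFunc : Tw C ⥤ Cᵒᵖ where
  obj x := op x.left
  map u := u.mleft.op

def rightFunc : Tw C ⥤ C where
  obj x := x.right
  map u := u.mright

section Category

variable {A : Type*} [Category A]

def functorOfNatTrans {L : Aᵒᵖ ⥤ C} {R : A ⥤ C}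
    (α : CategoryTheory.Prod.fst Aᵒᵖ A ⋙ L ⟶ CategoryTheory.Prod.snd Aᵒᵖ A ⋙ R) :
    A ⥤ Tw C where
  obj a := Tw.mk (α.app (op a, a))
  map {a b} f :=
    { mleft := L.map f.op
      mright := R.map f
      w := by
        have h₁ : L.map f.op ≫ α.app (op a, a) = α.app (op b, a) := by
          simpa using α.naturality (X := (op b, a)) (Y := (op a, a)) (f.op, 𝟙 a)
        have h₂ : α.app (op b, a) ≫ R.map f = α.app (op b, b) := by
          simpa using (α.naturality (X := (op b, a)) (Y := (op b, b)) (𝟙 (op b), f)).symm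
        dsimp only
        rw [reassoc_of% h₁, h₂] }

def ofJoin (H : Aᵒᵖ ⋆ A ⥤ C) : A ⥤ Tw C :=
  functorOfNatTrans (L := Join.inclLeft Aᵒᵖ A ⋙ H) (R := Join.inclRight Aᵒᵖ A ⋙ H)
    (Functor.whiskerRight (Join.edgeTransform Aᵒᵖ A) H)

lemma ofJoin_mapPair {B : Type*} [Category B] (φ : A ⥤ B) (H : Bᵒᵖ ⋆ B ⥤ C) :
    ofJoin (Join.mapPair φ.op φ ⋙ H) = φ ⋙ ofJoin H :=
  CategoryTheory.Functor.hext (fun _ => rfl) fun _ _ _ => heq_of_eq (by ext <;> rfl)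

def zigzag (G : A ⥤ Tw C) {a b c : A} (f : c ⟶ a) (g : c ⟶ b) :
    (G.obj a).left ⟶ (G.obj b).right :=
  (G.map f).mleft ≫ (G.obj c).hom ≫ (G.map g).mright

lemma zigzag_comp (G : A ⥤ Tw C) {a b c d : A} (h : c ⟶ d) (f : d ⟶ a) (g : d ⟶ b) :
    zigzag G (h ≫ f) (h ≫ g) = zigzag G f g := by
  simp only [zigzag, Functor.map_comp, comp_mleft, comp_mright, Category.assoc, ← (G.map h).w]

lemma mleft_comp_zigzag (G : A ⥤ Tw C) {a a' b c : A} (h : a' ⟶ a) (f : c ⟶ a') (g : c ⟶ b) :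
    (G.map h).mleft ≫ zigzag G f g = zigzag G (f ≫ h) g := by
  simp [zigzag]

lemma zigzag_comp_mright (G : A ⥤ Tw C) {a b b' c : A} (f : c ⟶ a) (g : c ⟶ b) (h : b ⟶ b') :
    zigzag G f g ≫ (G.map h).mright = zigzag G f (g ≫ h) := by
  simp [zigzag]

lemma zigzag_id (G : A ⥤ Tw C) (a : A) : zigzag G (𝟙 a) (𝟙 a) = (G.obj a).hom := by
  simp [zigzag]

end Category

section LinearOrder

variable {A : Type*} [LinearOrder A]

lemma zigzag_eq_zigzag (G : A ⥤ Tw C) {a b c d : A} (f : c ⟶ a) (g : c ⟶ b) (f' : d ⟶ a)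
    (g' : d ⟶ b) : zigzag G f g = zigzag G f' g' := by
  rcases le_total c d with h | h
  · rw [← zigzag_comp G (homOfLE h) f' g']; congr 1
  · rw [← zigzag_comp G (homOfLE h) f g]; congr 1

def zigzagTrans (G : A ⥤ Tw C) :
    CategoryTheory.Prod.fst Aᵒᵖ A ⋙ (G ⋙ leftFunc).leftOp ⟶
      CategoryTheory.Prod.snd Aᵒᵖ A ⋙ G ⋙ rightFunc where
  app x := zigzag G (homOfLE (min_le_left x.1.unop x.2)) (homOfLE (min_le_right x.1.unop x.2))
  naturality x y f := by
    change (G.map f.1.unop).mleft ≫ _ = _ ≫ (G.map f.2).mright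
    rw [mleft_comp_zigzag, zigzag_comp_mright]
    exact zigzag_eq_zigzag _ _ _ _ _

lemma functorOfNatTrans_zigzagTrans (G : A ⥤ Tw C) : functorOfNatTrans (zigzagTrans G) = G := by
  have hobj (a : A) : (functorOfNatTrans (zigzagTrans G)).obj a = G.obj a :=
    congrArg Tw.mk ((zigzag_eq_zigzag G _ _ (𝟙 a) (𝟙 a)).trans (zigzag_id G a))
  refine CategoryTheory.Functor.ext hobj fun a b f => ?_
  -- the remaining `eqToHom`s are between definitionally equal objects, hence identities
  ext <;> simp only [comp_mleft, comp_mright, eqToHom_mleft, eqToHom_mright, Category.assoc] <;>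
    exact ((Category.id_comp (obj := C) _).trans (Category.comp_id _)).symm

lemma zigzagTrans_ofJoin (H : Aᵒᵖ ⋆ A ⥤ C) :
    zigzagTrans (ofJoin H) = Functor.whiskerRight (Join.edgeTransform Aᵒᵖ A) H := by
  ext x
  change H.map _ ≫ H.map _ ≫ H.map _ = H.map _
  rw [← H.map_comp, ← H.map_comp]
  congr 1

def functorEquiv : (A ⥤ Tw C) ≃ (Aᵒᵖ ⋆ A ⥤ C) where
  toFun G := Join.mkFunctor _ _ (zigzagTrans G)
  invFun := ofJoin
  left_inv G := functorOfNatTrans_zigzagTrans G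
  right_inv H := by
    dsimp only
    rw [zigzagTrans_ofJoin]
    exact Join.mkFunctor_whiskerRight_edgeTransform H

end LinearOrder

end Tw

namespace SimplexCategory

noncomputable def joinToFin (n : ℕ) : (Fin (n + 1))ᵒᵖ ⋆ Fin (n + 1) ⥤ Fin (2 * n + 1 + 1) :=
  Functor.ofNonemptyHom
    (fun x => match x with
      | .left a => ⟨n - a.unop, by omega⟩
      | .right b => ⟨n + 1 + b, by omega⟩)
    (by
      intro x y f
      refine ⟨homOfLE ?_⟩
      cases f with
      | left a b f => have := leOfHom f.unop; simp only [Join.inclLeft_obj, Fin.mk_le_mk]; omega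
      | right a b f => have := leOfHom f; simp only [Join.inclRight_obj, Fin.mk_le_mk]; omega
      | edge a b => simp only [Fin.mk_le_mk]; omega)

noncomputable def finToJoin (n : ℕ) : Fin (2 * n + 1 + 1) ⥤ (Fin (n + 1))ᵒᵖ ⋆ Fin (n + 1) :=
  Functor.ofNonemptyHom
    (fun k => if k.val ≤ n then .left (op ⟨n - k, by omega⟩) else .right ⟨k - n - 1, by omega⟩)
    (by
      intro k l f
      have hkl := leOfHom f
      simp only [Fin.le_def] at hkl
      split_ifs
      · exact ⟨(Join.inclLeft _ _).map (homOfLE (by simp only [Fin.mk_le_mk]; omega)).op⟩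
      · exact ⟨Join.edge _ _⟩
      · omega
      · exact ⟨(Join.inclRight _ _).map (homOfLE (by simp only [Fin.mk_le_mk]; omega))⟩)

lemma finToJoin_comp_joinToFin (n : ℕ) : finToJoin n ⋙ joinToFin n = 𝟭 _ := by
  refine Functor.ext_of_isThin fun k => ?_
  dsimp [finToJoin, joinToFin, Functor.ofNonemptyHom]
  split_ifs <;> ext <;> simp <;> omega

lemma joinToFin_comp_finToJoin (n : ℕ) : joinToFin n ⋙ finToJoin n = 𝟭 _ := by
  refine Functor.ext_of_isThin fun x => ?_
  cases x with
  | left a =>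
    have := (unop a).isLt
    simp only [finToJoin, joinToFin, Functor.ofNonemptyHom, Functor.comp_obj, Functor.id_obj,
      if_pos (Nat.sub_le n _), Join.left.injEq]
    exact unop_injective (Fin.ext (by simp only; omega))
  | right b =>
    simp only [finToJoin, joinToFin, Functor.ofNonemptyHom, Functor.comp_obj, Functor.id_obj,
      if_neg (show ¬n + 1 + b.val ≤ n by omega), Join.right.injEq]
    exact Fin.ext (by simp only; omega)

lemma joinToFin_comp_sdMap {m n : ℕ} (α : Fin (m + 1) →o Fin (n + 1)) :
    joinToFin m ⋙ (sdMap α).monotone.functor =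
      Join.mapPair α.monotone.functor.op α.monotone.functor ⋙ joinToFin n := by
  refine Functor.ext_of_isThin fun x => ?_
  refine Fin.ext ?_
  cases x with
  | left a =>
    have := (unop a).isLt
    simp only [joinToFin, Functor.ofNonemptyHom, Functor.comp_obj, Monotone.functor_obj,
      Join.mapPair_obj_left, Functor.op_obj]
    rw [sdMap_of_le _ _ (by simp)]
    congr 3
    exact Fin.ext (by simp only; omega)
  | right b =>
    simp only [joinToFin, Functor.ofNonemptyHom, Functor.comp_obj, Monotone.functor_obj,
      Join.mapPair_obj_right]
    rw [sdMap_of_gt _ _ (by simp only; omega)]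
    congr 3
    exact Fin.ext (by simp only; omega)

end SimplexCategory

open SimplexCategory in
noncomputable def sdNerveEquiv (C : Type u) [Category.{v} C] (n : ℕ) :
    ComposableArrows C (2 * n + 1) ≃ ComposableArrows (Tw C) n where
  toFun F := Tw.ofJoin (joinToFin n ⋙ F)
  invFun G := finToJoin n ⋙ Tw.functorEquiv G
  left_inv F := by
    change finToJoin n ⋙ Tw.functorEquiv (Tw.functorEquiv.symm _) = F
    rw [Equiv.apply_symm_apply, ← Functor.assoc, finToJoin_comp_joinToFin, Functor.id_comp]
  right_inv G := by
    change Tw.functorEquiv.symm _ = G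
    rw [← Functor.assoc, joinToFin_comp_finToJoin, Functor.id_comp, Equiv.symm_apply_apply]

lemma sdNerveEquiv_naturality (C : Type u) [Category.{v} C] {m n : ℕ}
    (α : Fin (m + 1) →o Fin (n + 1)) (F : ComposableArrows C (2 * n + 1)) :
    sdNerveEquiv C m ((sdMap α).monotone.functor ⋙ F) =
      α.monotone.functor ⋙ sdNerveEquiv C n F := by
  change Tw.ofJoin (_ ⋙ _ ⋙ F) = _
  rw [← Functor.assoc, SimplexCategory.joinToFin_comp_sdMap, Functor.assoc, Tw.ofJoin_mapPair]
  rfl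

/-- For any small category `C`, the edgewise subdivision of the nerve of `C` is
(naturally) isomorphic to the nerve of the twisted arrow category of `C`. -/
theorem sd_nerve_iso_nerve_tw (C : Type u) [Category.{u} C] :
    Nonempty (Sd.obj (nerve C) ≅ nerve (Tw C)) :=
  ⟨NatIso.ofComponents (fun n => Equiv.toIso (sdNerveEquiv C n.unop.len)) fun f => by
    ext F
    exact sdNerveEquiv_naturality C f.unop.toOrderHom F⟩
end

section
/- Let C be an unpointed Waldhausen category with an initial object ∅ such that ∅ → X is a cofibration for every object X. If F : tw[n] → C is an object of cob(C)_n satisfying the additional condition that for each 0 ≤ i < n the canonical map F_{ii} ⊔ F_{i+1,i+1} → F_{i,i+1} is a cofibration, then for all 0 ≤ i ≤ j ≤ k ≤ n, the map F_{jk} → F_{ik} is a cofibration. -/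
open CategoryTheory Limits

/-- The twisted arrow poset `tw[n]` of `[n] = {0 < ⋯ < n}`: objects are pairs
`(i ≤ j)`, with `(i ≤ j) ⟶ (i' ≤ j')` exactly when `i' ≤ i` and `j ≤ j'`. -/
structure TwPoset (n : ℕ) where
  i : Fin (n + 1)
  j : Fin (n + 1)
  le : i ≤ j

instance (n : ℕ) : Preorder (TwPoset n) where
  le x y := y.i ≤ x.i ∧ x.j ≤ y.j
  le_refl x := ⟨le_refl _, le_refl _⟩
  le_trans x y z h h' := ⟨h'.1.trans h.1, h.2.trans h'.2⟩

/-!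
Write `i' = i + 1`. Pushing `∅ → F_{ii}` out along `∅ → F_{i'i'}` shows that the coproduct
inclusion `F_{i'i'} → F_{ii} ⊔ F_{i'i'}` is a cofibration, and composing with the cofibration
`F_{ii} ⊔ F_{i'i'} → F_{ii'}` gives that `F_{i'i'} → F_{ii'}` is one. The pushout square
`F_{i'i'}, F_{i'k}, F_{ii'}, F_{ik}` then makes `F_{i'k} → F_{ik}` a cofibration, and every
backward map `F_{jk} → F_{ik}` is a composite of such one-step maps. Identities are cofibrations
too, as cobase changes of `∅ → ∅`.
-/

namespace CategoryTheory.MorphismProperty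

open Limits

variable {C : Type*} [Category C] [HasInitial C] (P : MorphismProperty C)
  [P.IsStableUnderCobaseChange]

lemma containsIdentities_of_initial_to (h : ∀ X : C, P (initial.to X)) : P.ContainsIdentities :=
  ⟨fun X => P.of_isPushout (IsPushout.of_id_snd (f := initial.to X))
    (initial.hom_ext (initial.to (⊥_ C)) (𝟙 _) ▸ h (⊥_ C))⟩

lemma coprod_inr_mem {X Y : C} [HasBinaryCoproduct X Y] (h : P (initial.to X)) :
    P (coprod.inr : Y ⟶ X ⨿ Y) :=
  P.of_isPushout (IsPushout.of_hasBinaryCoproduct' X Y).flip h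

lemma of_coprod_desc_mem [P.IsStableUnderComposition] {X Y Z : C} [HasBinaryCoproduct X Y]
    {f : X ⟶ Z} {g : Y ⟶ Z} (hX : P (initial.to X)) (h : P (coprod.desc f g)) : P g := by
  simpa only [coprod.inr_desc] using P.comp_mem _ _ (P.coprod_inr_mem hX) h

end CategoryTheory.MorphismProperty

namespace TwPoset

open CategoryTheory

variable {n : ℕ}

lemma backward_le {i j k : Fin (n + 1)} (hij : i ≤ j) (hjk : j ≤ k) :
    (⟨j, k, hjk⟩ : TwPoset n) ≤ ⟨i, k, hij.trans hjk⟩ :=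
  ⟨hij, le_rfl⟩

lemma map_backward_le_mem_of_succ {C : Type*} [Category C] (F : TwPoset n ⥤ C)
    (P : MorphismProperty C) [P.ContainsIdentities] [P.IsStableUnderComposition]
    (hstep : ∀ {i j k : Fin (n + 1)} (hij : i ≤ j) (hjk : j ≤ k), (j : ℕ) = i + 1 →
      P (F.map (homOfLE (backward_le hij hjk))))
    {i j k : Fin (n + 1)} (hij : i ≤ j) (hjk : j ≤ k) :
    P (F.map (homOfLE (backward_le hij hjk))) := by
  obtain ⟨d, hd⟩ : ∃ d, (j : ℕ) = i + d := ⟨j - i, by omega⟩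
  induction d generalizing i with
  | zero =>
    obtain rfl : i = j := Fin.ext hd.symm
    simpa only [homOfLE_refl, F.map_id] using P.id_mem _
  | succ d ih =>
    let i' : Fin (n + 1) := ⟨i + 1, by omega⟩
    have hii' : i ≤ i' := Fin.le_def.mpr (Nat.le_succ _)
    have hi'j : i' ≤ j := Fin.le_def.mpr (by simp only [i']; omega)
    simpa only [← F.map_comp, homOfLE_comp] using
      P.comp_mem _ _ (ih hi'j (by simp only [i']; omega)) (hstep hii' (hi'j.trans hjk) rfl)

end TwPoset

theorem backwards_maps_are_cofibrations_general
    {C : Type*} [Category C] (cof : MorphismProperty C)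
    (hcomp : ∀ {X Y Z : C} (f : X ⟶ Y) (g : Y ⟶ Z), cof f → cof g → cof (f ≫ g))
    (hcobase : ∀ {A B X P : C} (f : A ⟶ B) (g : A ⟶ X) (h : B ⟶ P) (k : X ⟶ P),
      cof f → IsPushout f g h k → cof k)
    [HasInitial C] [HasBinaryCoproducts C]
    (hinit : ∀ X : C, cof (initial.to X))
    {n : ℕ} (F : TwPoset n ⥤ C)
    -- `F` is an object of `cob(C)_n`:
    (hFpo : ∀ (i j k l : Fin (n + 1)) (hij : i ≤ j) (hjk : j ≤ k) (hkl : k ≤ l),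
      IsPushout
        (F.map (homOfLE (show (⟨j, k, hjk⟩ : TwPoset n) ≤ ⟨j, l, hjk.trans hkl⟩ from
          ⟨le_refl _, hkl⟩)))
        (F.map (homOfLE (show (⟨j, k, hjk⟩ : TwPoset n) ≤ ⟨i, k, hij.trans hjk⟩ from
          ⟨hij, le_refl _⟩)))
        (F.map (homOfLE (show (⟨j, l, hjk.trans hkl⟩ : TwPoset n) ≤
          ⟨i, l, (hij.trans hjk).trans hkl⟩ from ⟨hij, le_refl _⟩)))
        (F.map (homOfLE (show (⟨i, k, hij.trans hjk⟩ : TwPoset n) ≤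
          ⟨i, l, (hij.trans hjk).trans hkl⟩ from ⟨le_refl _, hkl⟩))))
    -- the additional condition (iii):
    (hsum : ∀ (i i' : Fin (n + 1)) (hii' : i ≤ i'), (i' : ℕ) = (i : ℕ) + 1 →
      cof (coprod.desc
        (F.map (homOfLE (show (⟨i, i, le_refl i⟩ : TwPoset n) ≤ ⟨i, i', hii'⟩ from
          ⟨le_refl _, hii'⟩)))
        (F.map (homOfLE (show (⟨i', i', le_refl i'⟩ : TwPoset n) ≤ ⟨i, i', hii'⟩ from
          ⟨hii', le_refl _⟩))))) :
    ∀ (i j k : Fin (n + 1)) (hij : i ≤ j) (hjk : j ≤ k),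
      cof (F.map (homOfLE (show (⟨j, k, hjk⟩ : TwPoset n) ≤ ⟨i, k, hij.trans hjk⟩ from
        ⟨hij, le_refl _⟩))) := by
  have : cof.IsStableUnderComposition := ⟨hcomp⟩
  have : cof.IsStableUnderCobaseChange := ⟨fun sq hf => hcobase _ _ _ _ hf sq.flip⟩
  have : cof.ContainsIdentities := cof.containsIdentities_of_initial_to hinit
  intro i j k hij hjk
  refine TwPoset.map_backward_le_mem_of_succ F cof (fun {i j k} hij hjk hsucc => ?_) hij hjk
  exact cof.of_isPushout (hFpo i j j k hij le_rfl hjk)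
    (cof.of_coprod_desc_mem (hinit _) (hsum i j hij hsucc))

/-- Let `C` be an unpointed Waldhausen category with an initial object `∅` such
that `∅ → X` is always a cofibration.  If `F : tw[n] → C` is an object of
`cob(C)_n` such that moreover each canonical map `F_{ii} ⊔ F_{i+1,i+1} → F_{i,i+1}`
is a cofibration, then all the "backwards" maps `F_{jk} → F_{ik}` (`i ≤ j ≤ k`)
are cofibrations. -/
theorem backwards_maps_are_cofibrations
    {C : Type*} [Category C] (cof : MorphismProperty C)
    (hiso : ∀ {X Y : C} (f : X ⟶ Y), IsIso f → cof f)
    (hcomp : ∀ {X Y Z : C} (f : X ⟶ Y) (g : Y ⟶ Z), cof f → cof g → cof (f ≫ g))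
    (hcobase : ∀ {A B X P : C} (f : A ⟶ B) (g : A ⟶ X) (h : B ⟶ P) (k : X ⟶ P),
      cof f → IsPushout f g h k → cof k)
    [HasInitial C] [HasBinaryCoproducts C]
    (hinit : ∀ X : C, cof (initial.to X))
    {n : ℕ} (F : TwPoset n ⥤ C)
    -- `F` is an object of `cob(C)_n`:
    (hFcof : ∀ (i j k : Fin (n + 1)) (hij : i ≤ j) (hjk : j ≤ k),
      cof (F.map (homOfLE (show (⟨i, j, hij⟩ : TwPoset n) ≤ ⟨i, k, hij.trans hjk⟩ from
        ⟨le_refl _, hjk⟩))))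
    (hFpo : ∀ (i j k l : Fin (n + 1)) (hij : i ≤ j) (hjk : j ≤ k) (hkl : k ≤ l),
      IsPushout
        (F.map (homOfLE (show (⟨j, k, hjk⟩ : TwPoset n) ≤ ⟨j, l, hjk.trans hkl⟩ from
          ⟨le_refl _, hkl⟩)))
        (F.map (homOfLE (show (⟨j, k, hjk⟩ : TwPoset n) ≤ ⟨i, k, hij.trans hjk⟩ from
          ⟨hij, le_refl _⟩)))
        (F.map (homOfLE (show (⟨j, l, hjk.trans hkl⟩ : TwPoset n) ≤
          ⟨i, l, (hij.trans hjk).trans hkl⟩ from ⟨hij, le_refl _⟩)))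
        (F.map (homOfLE (show (⟨i, k, hij.trans hjk⟩ : TwPoset n) ≤
          ⟨i, l, (hij.trans hjk).trans hkl⟩ from ⟨le_refl _, hkl⟩))))
    -- the additional condition (iii):
    (hsum : ∀ (i i' : Fin (n + 1)) (hii' : i ≤ i'), (i' : ℕ) = (i : ℕ) + 1 →
      cof (coprod.desc
        (F.map (homOfLE (show (⟨i, i, le_refl i⟩ : TwPoset n) ≤ ⟨i, i', hii'⟩ from
          ⟨le_refl _, hii'⟩)))
        (F.map (homOfLE (show (⟨i', i', le_refl i'⟩ : TwPoset n) ≤ ⟨i, i', hii'⟩ from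
          ⟨hii', le_refl _⟩))))) :
    ∀ (i j k : Fin (n + 1)) (hij : i ≤ j) (hjk : j ≤ k),
      cof (F.map (homOfLE (show (⟨j, k, hjk⟩ : TwPoset n) ≤ ⟨i, k, hij.trans hjk⟩ from
        ⟨hij, le_refl _⟩))) :=
  backwards_maps_are_cofibrations_general cof hcomp hcobase hinit F hFpo hsum
end
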